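/- arXiv:2303.05468 — 2 statements merged into one kernel-verified Lean document; each statement's English description precedes it below -/
import Mathlib

section
/- Let n ≥ 4. The quasi-abelian group QA_n has exactly 5·2^{n-3} conjugacy classes. -/
/-!
Write `n = k + 3`. Since `y x y⁻¹ = x z` with `z = x ^ (2 ^ (k + 1))` a central involution, every
element of `QA n` is `x ^ i` or `x ^ i * y` with `i` modulo `2 ^ (k + 2)`, which gives an explicit
model of order `2 ^ (k + 3)`. In it every commutator is a power of `z`, so each conjugacy class
`{g}` or `{g, z * g}` has at most two elements, and counting classes by their size gives
`2 · #classes = |G| + |Z(G)|`. The centre consists of the even powers of `x`, so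
`2 · #classes = 2 ^ (k + 3) + 2 ^ (k + 1) = 10 · 2 ^ k`.
-/

/-- The relators of the quasi-abelian group `QA_n`:
`x^(2^(n-1)) = 1`, `y^2 = 1`, `y * x * y⁻¹ = x^(2^(n-2)+1)`.
The generator `x` is encoded by `true` and `y` by `false`. -/
def qaRels (n : ℕ) : Set (FreeGroup Bool) :=
  {FreeGroup.of true ^ 2 ^ (n - 1),
   FreeGroup.of false ^ 2,
   FreeGroup.of false * FreeGroup.of true * (FreeGroup.of false)⁻¹ *
     (FreeGroup.of true ^ (2 ^ (n - 2) + 1))⁻¹}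

abbrev QA (n : ℕ) : Type := PresentedGroup (qaRels n)

def qx (n : ℕ) : QA n := PresentedGroup.of true

def qy (n : ℕ) : QA n := PresentedGroup.of false

open Subgroup
open scoped commutatorElement

section ConjClasses

variable {G : Type*} [Group G]

theorem ConjClasses.ncard_carrier_le_card_commutator [Finite (commutator G)]
    (c : ConjClasses G) : c.carrier.ncard ≤ Nat.card (commutator G) := by
  obtain ⟨g, rfl⟩ := ConjClasses.mk_surjective c
  have hsub : (ConjClasses.mk g).carrier ⊆ (· * g) '' (commutator G : Set G) := by
    intro h hh
    obtain ⟨u, rfl⟩ := isConj_iff.mp (ConjClasses.mk_eq_mk_iff_isConj.mp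
      (ConjClasses.mem_carrier_iff_mk_eq.mp hh).symm)
    exact ⟨⁅u, g⁆, commutator_mem_commutator (mem_top u) (mem_top g), by group⟩
  calc (ConjClasses.mk g).carrier.ncard ≤ ((· * g) '' (commutator G : Set G)).ncard :=
        Set.ncard_le_ncard hsub ((commutator G : Set G).toFinite.image _)
    _ = Nat.card (commutator G) := by
        rw [Set.ncard_image_of_injective _ (mul_left_injective g), ← SetLike.coe_sort_coe,
          Nat.card_coe_set_eq]

theorem two_mul_card_conjClasses_of_ncard_le_two [Finite G]
    (h : ∀ c : ConjClasses G, c.carrier.ncard ≤ 2) :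
    2 * Nat.card (ConjClasses G) = Nat.card G + Nat.card (center G) := by
  have hcentral : ((ConjClasses.noncenter G)ᶜ).ncard = Nat.card (center G) := by
    rw [← Nat.card_coe_set_eq, Nat.card_congr ((ConjClasses.mk_bijOn G).equiv _).symm]
    rfl
  have hnoncentral : ∑ᶠ c ∈ ConjClasses.noncenter G, Nat.card c.carrier =
      2 * (ConjClasses.noncenter G).ncard := by
    rw [← finsum_one, mul_finsum_mem]
    refine finsum_mem_congr rfl fun c hc => ?_
    rw [Nat.card_coe_set_eq, mul_one]
    exact le_antisymm (h c) (Set.one_lt_ncard_iff_nontrivial.mpr hc)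
  have hclass := Group.nat_card_center_add_sum_card_noncenter_eq_card G
  rw [← Set.ncard_add_ncard_compl (ConjClasses.noncenter G), hcentral]
  omega

theorem card_conjClasses_congr {H : Type*} [Group H] (e : G ≃* H) :
    Nat.card (ConjClasses G) = Nat.card (ConjClasses H) :=
  Nat.card_congr <| Quotient.congr e.toEquiv fun a b =>
    show IsConj a b ↔ IsConj (e a) (e b) from
      ⟨e.toMonoidHom.map_isConj, fun h => by simpa using e.symm.toMonoidHom.map_isConj h⟩

end ConjClasses

theorem ZMod.ncard_setOf_castHom_eq_zero_mul {m d : ℕ} (h : d ∣ m) :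
    {i : ZMod m | ZMod.castHom h (ZMod d) i = 0}.ncard * d = m := by
  let f : ZMod m →+ ZMod d := (ZMod.castHom h (ZMod d)).toAddMonoidHom
  have hrange : f.range = ⊤ := AddMonoidHom.range_eq_top.mpr (ZMod.ringHom_surjective _)
  calc {i : ZMod m | ZMod.castHom h (ZMod d) i = 0}.ncard * d
      = Nat.card f.ker * f.ker.index := by
        rw [AddSubgroup.index_ker, hrange, AddSubgroup.card_top, Nat.card_zmod,
          ← Nat.card_coe_set_eq]
        rfl
    _ = m := by rw [AddSubgroup.card_mul_index, Nat.card_zmod]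

theorem qx_pow_two_pow (n : ℕ) : qx n ^ 2 ^ (n - 1) = 1 :=
  (map_pow _ _ _).symm.trans (PresentedGroup.one_of_mem (Set.mem_insert _ _))

theorem qy_sq (n : ℕ) : qy n ^ 2 = 1 :=
  (map_pow _ _ _).symm.trans
    (PresentedGroup.one_of_mem (Set.mem_insert_of_mem _ (Set.mem_insert _ _)))

theorem qy_mul_qx_mul_qy_inv (n : ℕ) : qy n * qx n * (qy n)⁻¹ = qx n ^ (2 ^ (n - 2) + 1) := by
  have h := PresentedGroup.mk_eq_mk_of_mul_inv_mem (rels := qaRels n)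
    (Set.mem_insert_of_mem _ (Set.mem_insert_of_mem _ rfl))
  simp only [map_mul, map_inv, map_pow] at h
  exact h

theorem qy_mul_qx_pow (n j : ℕ) : qy n * qx n ^ j = qx n ^ ((2 ^ (n - 2) + 1) * j) * qy n := by
  rw [← mul_inv_eq_iff_eq_mul, ← conj_pow, qy_mul_qx_mul_qy_inv, pow_mul]

/-- `x i` stands for `x ^ i` and `xy i` for `x ^ i * y` in `QA (k + 3)`. -/
inductive QAModel (k : ℕ) : Type
  | x : ZMod (2 ^ (k + 2)) → QAModel k
  | xy : ZMod (2 ^ (k + 2)) → QAModel k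

namespace QAModel

variable {k : ℕ}

/-- The exponent of the central involution `x ^ (2 ^ (k + 1))`; conjugation by `y` multiplies
exponents of `x` by `1 + t`. -/
def t (k : ℕ) : ZMod (2 ^ (k + 2)) := 2 ^ (k + 1)

theorem t_add_t : t k + t k = 0 := by
  have h : t k + t k = ((2 ^ (k + 2) : ℕ) : ZMod (2 ^ (k + 2))) := by rw [t]; push_cast; ring
  rw [h, ZMod.natCast_self]

theorem t_mul_t : t k * t k = 0 := by
  have h := t_add_t (k := k)
  unfold t at h ⊢
  linear_combination (2 : ZMod (2 ^ (k + 2))) ^ k * h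

theorem one_add_t_mul_self : (1 + t k) * (1 + t k) = 1 := by
  linear_combination t_add_t (k := k) + t_mul_t

theorem t_eq_natCast : t k = ((2 ^ (k + 1) : ℕ) : ZMod (2 ^ (k + 2))) := by
  rw [t, Nat.cast_pow, Nat.cast_ofNat]

theorem t_ne_zero : t k ≠ 0 := by
  rw [t_eq_natCast, Ne, ZMod.natCast_eq_zero_iff, Nat.pow_dvd_pow_iff_le_right (by norm_num)]
  omega

theorem t_mul_eq_zero_iff (i : ZMod (2 ^ (k + 2))) :
    t k * i = 0 ↔ ZMod.castHom (dvd_pow_self 2 (by omega)) (ZMod 2) i = 0 := by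
  rw [← ZMod.natCast_zmod_val i, map_natCast, t_eq_natCast, ← Nat.cast_mul,
    ZMod.natCast_eq_zero_iff, ZMod.natCast_eq_zero_iff]
  exact Nat.mul_dvd_mul_iff_left (Nat.two_pow_pos (k + 1))

instance : Mul (QAModel k) where
  mul
    | x i, x j => x (i + j)
    | x i, xy j => xy (i + j)
    | xy i, x j => xy (i + (1 + t k) * j)
    | xy i, xy j => x (i + (1 + t k) * j)

instance : One (QAModel k) := ⟨x 0⟩

instance : Inv (QAModel k) where
  inv
    | x i => x (-i)
    | xy i => xy (-((1 + t k) * i))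

@[simp] theorem x_mul_x (i j : ZMod (2 ^ (k + 2))) : x i * x j = x (i + j) := rfl
@[simp] theorem x_mul_xy (i j : ZMod (2 ^ (k + 2))) : x i * xy j = xy (i + j) := rfl
@[simp] theorem xy_mul_x (i j : ZMod (2 ^ (k + 2))) : xy i * x j = xy (i + (1 + t k) * j) := rfl
@[simp] theorem xy_mul_xy (i j : ZMod (2 ^ (k + 2))) : xy i * xy j = x (i + (1 + t k) * j) := rfl
@[simp] theorem one_def : (1 : QAModel k) = x 0 := rfl
@[simp] theorem inv_x (i : ZMod (2 ^ (k + 2))) : (x i)⁻¹ = x (-i) := rfl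
@[simp] theorem inv_xy (i : ZMod (2 ^ (k + 2))) : (xy i)⁻¹ = xy (-((1 + t k) * i)) := rfl

instance : Group (QAModel k) where
  mul_assoc a b c := by
    rcases a with i | i <;> rcases b with j | j <;> rcases c with l | l <;>
      simp only [x_mul_x, x_mul_xy, xy_mul_x, xy_mul_xy] <;> congr 1 <;>
      first | ring1 | linear_combination (-l) * one_add_t_mul_self (k := k)
  one_mul a := by cases a <;> simp
  mul_one a := by cases a <;> simp
  inv_mul_cancel a := by
    cases a <;> simp only [inv_x, inv_xy, x_mul_x, xy_mul_xy, one_def] <;> congr 1 <;> ring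

theorem x_pow (i : ZMod (2 ^ (k + 2))) (m : ℕ) : x i ^ m = x (m • i) := by
  induction m with
  | zero => simp
  | succ m ih => rw [pow_succ, ih, x_mul_x, succ_nsmul]

theorem qx_pow_val_eq {c : ZMod (2 ^ (k + 2))} {m : ℕ} (h : (m : ZMod (2 ^ (k + 2))) = c) :
    qx (k + 3) ^ c.val = qx (k + 3) ^ m := by
  rw [← h, ZMod.val_natCast]
  exact (pow_eq_pow_mod m (qx_pow_two_pow (k + 3))).symm

def toQA : QAModel k →* QA (k + 3) where
  toFun
    | x i => qx (k + 3) ^ i.val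
    | xy i => qx (k + 3) ^ i.val * qy (k + 3)
  map_one' := by simp
  map_mul' g h := by
    have hconj : ∀ j, qy (k + 3) * qx (k + 3) ^ j =
        qx (k + 3) ^ ((2 ^ (k + 1) + 1) * j) * qy (k + 3) := qy_mul_qx_pow (k + 3)
    have hy : qy (k + 3) * qy (k + 3) = 1 := (pow_two _).symm.trans (qy_sq _)
    rcases g with i | i <;> rcases h with j | j <;> dsimp only
    · rw [← pow_add]
      exact qx_pow_val_eq (by push_cast [ZMod.natCast_zmod_val]; rfl)
    · rw [← mul_assoc, ← pow_add]
      congr 1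
      exact qx_pow_val_eq (by push_cast [ZMod.natCast_zmod_val]; rfl)
    · rw [mul_assoc, hconj, ← mul_assoc, ← pow_add]
      congr 1
      exact qx_pow_val_eq (by push_cast [ZMod.natCast_zmod_val]; rw [t]; ring)
    · rw [mul_assoc, ← mul_assoc (qy _), hconj, mul_assoc, hy, mul_one, ← pow_add]
      exact qx_pow_val_eq (by push_cast [ZMod.natCast_zmod_val]; rw [t]; ring)

def toModel : QA (k + 3) →* QAModel k :=
  PresentedGroup.toGroup (f := fun b => bif b then x 1 else xy 0) <| by
    rintro r (rfl | rfl | rfl)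
    · simp only [map_pow, FreeGroup.lift_apply_of, cond_true, x_pow, nsmul_eq_mul, mul_one]
      exact congrArg x (ZMod.natCast_self _)
    · simp [pow_two]
    · simp only [map_mul, map_inv, map_pow, FreeGroup.lift_apply_of, cond_true, cond_false,
        xy_mul_x, xy_mul_xy, inv_xy, x_pow, inv_x, x_mul_x, one_def, x.injEq, nsmul_eq_mul]
      push_cast [t]
      ring

@[simp] theorem toModel_qx : toModel (qx (k + 3)) = x 1 := PresentedGroup.toGroup.of _

@[simp] theorem toModel_qy : toModel (qy (k + 3)) = xy 0 := PresentedGroup.toGroup.of _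

@[simp] theorem toQA_x (i : ZMod (2 ^ (k + 2))) : toQA (x i) = qx (k + 3) ^ i.val := rfl

@[simp] theorem toQA_xy (i : ZMod (2 ^ (k + 2))) : toQA (xy i) = qx (k + 3) ^ i.val * qy (k + 3) :=
  rfl

def equivQA : QA (k + 3) ≃* QAModel k :=
  MonoidHom.toMulEquiv toModel toQA
    (PresentedGroup.ext fun b => by
      cases b
      · change toQA (toModel (qy (k + 3))) = qy (k + 3)
        simp
      · change toQA (toModel (qx (k + 3))) = qx (k + 3)
        rw [toModel_qx, toQA_x, qx_pow_val_eq Nat.cast_one, pow_one])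
    (MonoidHom.ext fun g => by cases g <;> simp [x_pow])

def equivSum (k : ℕ) : QAModel k ≃ ZMod (2 ^ (k + 2)) ⊕ ZMod (2 ^ (k + 2)) where
  toFun | x i => .inl i | xy i => .inr i
  invFun | .inl i => x i | .inr i => xy i
  left_inv g := by cases g <;> rfl
  right_inv s := by cases s <;> rfl

instance : Finite (QAModel k) := .of_equiv _ (equivSum k).symm

theorem card_eq : Nat.card (QAModel k) = 2 ^ (k + 3) := by
  rw [Nat.card_congr (equivSum k), Nat.card_sum, Nat.card_zmod]
  ring

theorem exists_commutatorElement_eq (g h : QAModel k) : ∃ c, ⁅g, h⁆ = x (t k * c) := by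
  have hR := one_add_t_mul_self (k := k)
  rcases g with i | i <;> rcases h with j | j <;>
    simp only [commutatorElement_def, x_mul_x, x_mul_xy, xy_mul_x, xy_mul_xy, inv_x, inv_xy,
      x.injEq]
  · exact ⟨0, by ring⟩
  · exact ⟨-i, by linear_combination (-j) * hR⟩
  · exact ⟨j, by linear_combination (-i) * hR⟩
  · exact ⟨j - i, by linear_combination (-j) * hR⟩

theorem card_commutator_le_two : Nat.card (commutator (QAModel k)) ≤ 2 := by
  have hle : commutator (QAModel k) ≤ zpowers (x (t k)) := by
    rw [commutator_def, commutator_le]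
    rintro g - h -
    obtain ⟨c, hc⟩ := exists_commutatorElement_eq g h
    rw [hc, mul_comm, ← ZMod.natCast_zmod_val c, ← nsmul_eq_mul, ← x_pow]
    exact npow_mem_zpowers _ _
  calc Nat.card (commutator (QAModel k)) ≤ Nat.card (zpowers (x (t k))) := card_le_of_le hle
    _ = orderOf (x (t k)) := Nat.card_zpowers _
    _ ≤ 2 := orderOf_le_of_pow_eq_one two_pos (by rw [x_pow, two_nsmul, t_add_t]; rfl)

theorem mem_center_iff_exists {g : QAModel k} :
    g ∈ center (QAModel k) ↔ ∃ i, t k * i = 0 ∧ x i = g := by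
  rw [mem_center_iff]
  constructor
  · intro hg
    cases g with
    | x i =>
      refine ⟨i, ?_, rfl⟩
      have := hg (xy 0)
      simp only [xy_mul_x, x_mul_xy, xy.injEq] at this
      linear_combination this
    | xy i =>
      have := hg (x 1)
      simp only [xy_mul_x, x_mul_xy, xy.injEq] at this
      exact absurd (by linear_combination -this) t_ne_zero
  · rintro ⟨i, hi, rfl⟩ (j | j)
    · rw [x_mul_x, x_mul_x, add_comm]
    · rw [xy_mul_x, x_mul_xy]
      congr 1
      linear_combination hi

theorem card_center : Nat.card (center (QAModel k)) = 2 ^ (k + 1) := by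
  have himage : (center (QAModel k) : Set (QAModel k)) = x '' {i | t k * i = 0} := by
    ext g
    simp [mem_center_iff_exists]
  have hker := ZMod.ncard_setOf_castHom_eq_zero_mul (dvd_pow_self 2 (by omega : k + 2 ≠ 0))
  rw [← Set.ext t_mul_eq_zero_iff] at hker
  rw [← SetLike.coe_sort_coe, Nat.card_coe_set_eq, himage,
    Set.ncard_image_of_injective _ fun _ _ => x.inj]
  exact Nat.eq_of_mul_eq_mul_right two_pos (hker.trans (pow_succ 2 (k + 1)))

theorem card_conjClasses : Nat.card (ConjClasses (QAModel k)) = 5 * 2 ^ k := by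
  have h := two_mul_card_conjClasses_of_ncard_le_two fun c : ConjClasses (QAModel k) =>
    c.ncard_carrier_le_card_commutator.trans card_commutator_le_two
  rw [card_eq, card_center, pow_add, pow_add] at h
  omega

end QAModel

/-- For `n ≥ 4`, the group `QA_n` has exactly `5 · 2^(n-3)` conjugacy classes. -/
theorem stmt6 (n : ℕ) (hn : 4 ≤ n) :
    Nat.card (ConjClasses (QA n)) = 5 * 2 ^ (n - 3) := by
  obtain ⟨k, rfl⟩ : ∃ k, n = k + 3 := ⟨n - 3, by omega⟩
  rw [card_conjClasses_congr QAModel.equivQA, QAModel.card_conjClasses, Nat.add_sub_cancel]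
end

section
/- Let n ≥ 4. The elements u = y, v = y x^{-1}, w = x of the quasi-abelian group QA_n satisfy u v w = 1, u has order 2, v has order 2^{n-1}, w has order 2^{n-1}, and {u, v, w} generates QA_n. In other words, QA_n is a smooth quotient of the (2, 2^{n-1}, 2^{n-1}) triangle group, i.e., it admits a generating triple with product 1 whose entries have orders exactly 2, 2^{n-1} and 2^{n-1}. -/
/-!
Write `n = m + 4`. In any group, `y ^ 2 = 1` and `y x y⁻¹ = x ^ k` give `(y x⁻¹) ^ 2 = x ^ (-(k + 1))`;
for `k = 2 ^ (m + 2) + 1` and `x ^ 2 ^ (m + 3) = 1` this yields `(y x⁻¹) ^ 2 ^ (m + 2) = x ^ 2 ^ (m + 2)`,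
so `y x⁻¹` has the same order `2 ^ (m + 3)` as `x`. The relations bound the orders of `x` and `y`
from above; the lower bounds come from the action of `QA_n` on `ZMod (2 ^ (m + 3))` by the affine
maps `x : t ↦ t + 1` and `y : t ↦ (2 ^ (m + 2) + 1) * t`.
-/

section ConjugationRelation

variable {G : Type*} [Group G] {x y : G}

theorem mul_inv_sq_of_conj_eq_pow {k : ℕ} (hy : y ^ 2 = 1) (hyx : y * x * y⁻¹ = x ^ k) :
    (y * x⁻¹) ^ 2 = (x ^ (k + 1))⁻¹ :=
  calc (y * x⁻¹) ^ 2 = (y * x * y⁻¹)⁻¹ * y ^ 2 * x⁻¹ := by rw [sq, sq]; group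
    _ = (x ^ (k + 1))⁻¹ := by rw [hyx, hy, mul_one, pow_succ', mul_inv_rev]

variable {m : ℕ}

theorem mul_inv_pow_two_pow_eq (hx : x ^ 2 ^ (m + 3) = 1) (hy : y ^ 2 = 1)
    (hyx : y * x * y⁻¹ = x ^ (2 ^ (m + 2) + 1)) :
    (y * x⁻¹) ^ 2 ^ (m + 2) = x ^ 2 ^ (m + 2) := by
  have hinv : (x ^ 2 ^ (m + 2))⁻¹ = x ^ 2 ^ (m + 2) :=
    inv_eq_of_mul_eq_one_right (by rw [← pow_add, ← two_mul, ← pow_succ', hx])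
  calc (y * x⁻¹) ^ 2 ^ (m + 2) = ((y * x⁻¹) ^ 2) ^ 2 ^ (m + 1) := by
        rw [← pow_mul, ← pow_succ']
    _ = ((x ^ 2 ^ (m + 3)) ^ 2 ^ m * x ^ 2 ^ (m + 2))⁻¹ := by
        rw [mul_inv_sq_of_conj_eq_pow hy hyx, inv_pow, ← pow_mul, ← pow_mul, ← pow_add]
        ring_nf
    _ = x ^ 2 ^ (m + 2) := by rw [hx, one_pow, one_mul, hinv]

theorem orderOf_mul_inv_eq (hx : orderOf x = 2 ^ (m + 3)) (hy : y ^ 2 = 1)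
    (hyx : y * x * y⁻¹ = x ^ (2 ^ (m + 2) + 1)) :
    orderOf (y * x⁻¹) = 2 ^ (m + 3) := by
  have hx' : x ^ 2 ^ (m + 3) = 1 := hx ▸ pow_orderOf_eq_one x
  have hv := mul_inv_pow_two_pow_eq hx' hy hyx
  refine orderOf_eq_prime_pow ?_ ?_
  · rw [hv]
    exact pow_ne_one_of_lt_orderOf (by positivity) (hx ▸ Nat.pow_lt_pow_right one_lt_two (by omega))
  · rw [pow_succ, pow_mul, hv, ← pow_mul, ← pow_succ, hx']

end ConjugationRelation

namespace QA

theorem qx_pow (n : ℕ) : qx n ^ 2 ^ (n - 1) = 1 :=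
  PresentedGroup.one_of_mem (by simp [qaRels])

theorem qy_sq (n : ℕ) : qy n ^ 2 = 1 :=
  PresentedGroup.one_of_mem (by simp [qaRels])

theorem qy_mul_qx_mul_qy_inv (n : ℕ) : qy n * qx n * (qy n)⁻¹ = qx n ^ (2 ^ (n - 2) + 1) :=
  PresentedGroup.mk_eq_mk_of_mul_inv_mem (by simp [qaRels])

theorem closure_qx_qy (n : ℕ) : Subgroup.closure {qx n, qy n} = ⊤ := by
  rw [eq_top_iff, ← PresentedGroup.closure_range_of]
  refine Subgroup.closure_mono (Set.range_subset_iff.mpr fun b => ?_)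
  cases b <;> simp [qx, qy]

section Lift

variable {G : Type*} [Group G] {n : ℕ} {x y : G}

theorem lift_rels (hx : x ^ 2 ^ (n - 1) = 1) (hy : y ^ 2 = 1)
    (hyx : y * x * y⁻¹ = x ^ (2 ^ (n - 2) + 1)) :
    ∀ r ∈ qaRels n, FreeGroup.lift (fun b => bif b then x else y) r = 1 := by
  simp only [qaRels, Set.mem_insert_iff, Set.mem_singleton_iff]
  rintro r (rfl | rfl | rfl) <;> simp [hx, hy, hyx]

def lift (hx : x ^ 2 ^ (n - 1) = 1) (hy : y ^ 2 = 1)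
    (hyx : y * x * y⁻¹ = x ^ (2 ^ (n - 2) + 1)) : QA n →* G :=
  PresentedGroup.toGroup (lift_rels hx hy hyx)

variable (hx : x ^ 2 ^ (n - 1) = 1) (hy : y ^ 2 = 1) (hyx : y * x * y⁻¹ = x ^ (2 ^ (n - 2) + 1))

theorem lift_qx : lift hx hy hyx (qx n) = x := PresentedGroup.toGroup.of _

theorem lift_qy : lift hx hy hyx (qy n) = y := PresentedGroup.toGroup.of _

end Lift

end QA

theorem ZMod.natCast_pow_ne_zero {p : ℕ} (hp : 1 < p) (k : ℕ) :
    ((p : ZMod (p ^ (k + 1))) ^ k) ≠ 0 := by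
  rw [← Nat.cast_pow, Ne, ZMod.natCast_eq_zero_iff, Nat.pow_dvd_pow_iff_le_right hp]
  omega

namespace QA

variable (m : ℕ)

theorem two_pow_ne_zero : (2 : ZMod (2 ^ (m + 3))) ^ (m + 2) ≠ 0 := by
  exact_mod_cast ZMod.natCast_pow_ne_zero one_lt_two (m + 2)

theorem two_pow_eq_zero : (2 : ZMod (2 ^ (m + 3))) ^ (m + 3) = 0 := by
  exact_mod_cast ZMod.natCast_self (2 ^ (m + 3))

theorem scale_involutive :
    Function.Involutive fun t : ZMod (2 ^ (m + 3)) => (2 ^ (m + 2) + 1) * t := by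
  intro t
  linear_combination (2 ^ (m + 1) + 1) * t * two_pow_eq_zero m

def modelX : Equiv.Perm (ZMod (2 ^ (m + 3))) := Equiv.addRight 1

def modelY : Equiv.Perm (ZMod (2 ^ (m + 3))) := (scale_involutive m).toPerm _

theorem modelX_pow_apply (j : ℕ) (t : ZMod (2 ^ (m + 3))) : (modelX m ^ j) t = t + j := by
  simp only [modelX, Equiv.nsmul_addRight, nsmul_eq_mul, mul_one, Equiv.coe_addRight]

theorem modelX_pow_two_pow : modelX m ^ 2 ^ (m + 3) = 1 := by
  ext t
  simp [modelX_pow_apply]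

theorem modelX_pow_ne_one : modelX m ^ 2 ^ (m + 2) ≠ 1 := fun h =>
  two_pow_ne_zero m (by simpa [modelX_pow_apply] using congrArg (· 0) h)

theorem modelY_ne_one : modelY m ≠ 1 := fun h =>
  two_pow_ne_zero m (by simpa [modelY] using congrArg (· 1) h)

theorem modelY_sq : modelY m ^ 2 = 1 := by
  ext t
  simp [sq, modelY, scale_involutive m t]

theorem modelY_mul_modelX_mul_modelY_inv :
    modelY m * modelX m * (modelY m)⁻¹ = modelX m ^ (2 ^ (m + 2) + 1) := by
  ext t
  simp only [modelY, modelX, Equiv.Perm.mul_apply, Equiv.Perm.inv_def,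
    Function.Involutive.toPerm_symm, Function.Involutive.coe_toPerm, Equiv.coe_addRight]
  rw [← modelX, modelX_pow_apply]
  push_cast
  linear_combination scale_involutive m t

def toModel : QA (m + 4) →* Equiv.Perm (ZMod (2 ^ (m + 3))) :=
  lift (modelX_pow_two_pow m) (modelY_sq m) (modelY_mul_modelX_mul_modelY_inv m)

theorem toModel_qx : toModel m (qx (m + 4)) = modelX m := lift_qx ..

theorem toModel_qy : toModel m (qy (m + 4)) = modelY m := lift_qy ..

theorem orderOf_qx : orderOf (qx (m + 4)) = 2 ^ (m + 3) :=
  orderOf_eq_prime_pow (fun h => modelX_pow_ne_one m (by rw [← toModel_qx, ← map_pow, h, map_one]))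
    (qx_pow (m + 4))

theorem orderOf_qy : orderOf (qy (m + 4)) = 2 :=
  orderOf_eq_prime (qy_sq _) (fun h => modelY_ne_one m (by rw [← toModel_qy, h, map_one]))

end QA

/-- For `n ≥ 4`, the elements `u = y`, `v = y x⁻¹`, `w = x` of `QA_n` satisfy
`u v w = 1`, have orders `2`, `2^(n-1)`, `2^(n-1)` respectively, and generate `QA_n`;
i.e. `QA_n` is a smooth quotient of the `(2, 2^(n-1), 2^(n-1))` triangle group. -/
theorem stmt10 (n : ℕ) (hn : 4 ≤ n) :
    qy n * (qy n * (qx n)⁻¹) * qx n = 1 ∧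
    orderOf (qy n) = 2 ∧
    orderOf (qy n * (qx n)⁻¹) = 2 ^ (n - 1) ∧
    orderOf (qx n) = 2 ^ (n - 1) ∧
    Subgroup.closure {qy n, qy n * (qx n)⁻¹, qx n} = (⊤ : Subgroup (QA n)) := by
  obtain ⟨m, rfl⟩ : ∃ m, n = m + 4 := ⟨n - 4, by omega⟩
  refine ⟨?_, QA.orderOf_qy m, ?_, QA.orderOf_qx m, ?_⟩
  · rw [mul_assoc, inv_mul_cancel_right, ← sq, QA.qy_sq]
  · exact orderOf_mul_inv_eq (QA.orderOf_qx m) (QA.qy_sq _) (QA.qy_mul_qx_mul_qy_inv _)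
  · rw [eq_top_iff, ← QA.closure_qx_qy]
    exact Subgroup.closure_mono (by simp [Set.insert_subset_iff])
end
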